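/- arXiv:2207.04603 — 3 statements merged into one kernel-verified Lean document; each statement's English description precedes it below -/
import Mathlib

section
/- Let n ≥ 2, let |ψ_1⟩, ..., |ψ_{n−1}⟩ be unit vectors in C² such that for all i ≠ j, ⟨ψ_i|ψ_j⟩ ≠ 0 and ⟨ψ_i⊥|ψ_j⟩ ≠ 0, and ⟨0|ψ_i⟩ ≠ 0, ⟨1|ψ_i⟩ ≠ 0 for all i (where |ψ_i⊥⟩ is the unit vector orthogonal to |ψ_i⟩). Define the (2n−1)-qubit state |Ψ_1⟩ = |1⟩|ψ_1⟩···|ψ_{n−1}⟩|ψ_{n−1}⊥⟩···|ψ_1⊥⟩ and let |Ψ_k⟩ for k = 2,...,2n−1 be obtained from |Ψ_1⟩ by cyclically right-shifting the tensor factors k−1 times. Then the states |Ψ_1⟩, ..., |Ψ_{2n−1}⟩ are pairwise orthogonal. -/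
/-!
The inner product of two product states is the product of the inner products of their
tensor factors, so it suffices to find one position where `Ψ k` and `Ψ l` carry `ψ_m` and
`ψ_m⊥`. At position `j` they carry `F (k - 1 - j)` and `F (l - 1 - j)`, indices mod `2n - 1`.
As `2` is invertible mod `2n - 1`, `j` can be chosen with `k - 1 - j ≡ -(l - 1 - j)`; the two
indices are then `i` and `2n - 1 - i` with `0 < i < 2n - 1`, and `F i`, `F (2n - 1 - i)` is
always such an orthogonal pair.
-/

open Finset

namespace GenShifts

theorem sum_star_prod_mul_prod {ι α R : Type*} [Fintype ι] [DecidableEq ι] [Fintype α]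
    [CommSemiring R] [StarRing R] (u v : ι → α → R) :
    ∑ g : ι → α, star (∏ j, u j (g j)) * ∏ j, v j (g j) =
      ∏ j, ∑ x, star (u j x) * v j x := by
  simp_rw [star_prod, ← prod_mul_distrib]
  exact (Fintype.prod_sum fun j x => star (u j x) * v j x).symm

theorem two_mul_natCast_eq_one {n : ℕ} (hn : 0 < n) : (2 : ZMod (2 * n - 1)) * n = 1 := by
  have h : ((2 * n : ℕ) : ZMod (2 * n - 1)) = ((2 * n - 1 + 1 : ℕ) : ZMod (2 * n - 1)) := by
    rw [Nat.sub_add_cancel (by omega)]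
  push_cast [ZMod.natCast_self] at h
  simpa using h

theorem exists_sub_eq_neg_sub {N n : ℕ} [NeZero N] (h : (2 : ZMod N) * n = 1) (a b : ZMod N) :
    ∃ j : Fin N, a - (j : ℕ) = -(b - (j : ℕ)) :=
  ⟨⟨(n * (a + b)).val, ZMod.val_lt _⟩, by
    rw [ZMod.natCast_zmod_val]; linear_combination (-(a + b)) * h⟩

theorem mod_eq_val_sub {N : ℕ} (a j : ℕ) (hj : j ≤ a + N) :
    (a + N - j) % N = ((a : ZMod N) - j).val := by
  rw [← ZMod.val_natCast, Nat.cast_sub hj]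
  push_cast [ZMod.natCast_self]
  ring_nf

theorem sum_star_mul_compl_eq_zero {n : ℕ} {ψ ψp F : ℕ → Fin 2 → ℂ}
    (hperp : ∀ i, 1 ≤ i → i ≤ n - 1 → ∑ a, star (ψ i a) * ψp i a = 0)
    (hF : ∀ i, 1 ≤ i → i ≤ n - 1 → F i = ψp i ∧ F (2 * n - 1 - i) = ψ i)
    {i : ℕ} (hi : 0 < i) (hiN : i < 2 * n - 1) :
    ∑ a, star (F i a) * F (2 * n - 1 - i) a = 0 := by
  by_cases hin : i ≤ n - 1
  · obtain ⟨hFi, hFi'⟩ := hF i hi hin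
    rw [hFi, hFi']
    simpa [star_sum, mul_comm] using congrArg star (hperp i hi hin)
  · obtain ⟨hFm, hFm'⟩ := hF (2 * n - 1 - i) (by omega) (by omega)
    rw [Nat.sub_sub_self hiN.le] at hFm'
    rw [hFm', hFm]
    exact hperp _ (by omega) (by omega)

end GenShifts

open GenShifts

theorem stmt12_general (n : ℕ)
    (ψ ψp : ℕ → (Fin 2 → ℂ))
    (hperp : ∀ i, 1 ≤ i → i ≤ n - 1 → ∑ a, star (ψ i a) * ψp i a = 0)
    (F : ℕ → (Fin 2 → ℂ))
    (hF : ∀ i, 1 ≤ i → i ≤ n - 1 → F i = ψp i ∧ F (2 * n - 1 - i) = ψ i)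
    (Ψ : ℕ → ((Fin (2 * n - 1) → Fin 2) → ℂ))
    (hΨ : ∀ k g, Ψ k g = ∏ j : Fin (2 * n - 1),
      F ((k - 1 + (2 * n - 1) - (j : ℕ)) % (2 * n - 1)) (g j)) :
    ∀ k l, 1 ≤ k → k ≤ 2 * n - 1 → 1 ≤ l → l ≤ 2 * n - 1 → k ≠ l →
      ∑ g : Fin (2 * n - 1) → Fin 2, star (Ψ k g) * Ψ l g = 0 := by
  intro k l hk1 hkN hl1 hlN hkl
  have : NeZero (2 * n - 1) := ⟨by omega⟩
  set a : ZMod (2 * n - 1) := ((k - 1 : ℕ) : ZMod (2 * n - 1))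
  set b : ZMod (2 * n - 1) := ((l - 1 : ℕ) : ZMod (2 * n - 1))
  have hab : a ≠ b := fun h => hkl <| by
    have := congrArg ZMod.val h
    rw [ZMod.val_cast_of_lt (by omega), ZMod.val_cast_of_lt (by omega)] at this
    omega
  obtain ⟨j, hj⟩ := exists_sub_eq_neg_sub (two_mul_natCast_eq_one (by omega)) a b
  have hx : a - (j : ℕ) ≠ 0 := fun h => hab (by linear_combination 2 * h - hj)
  have : NeZero (a - (j : ℕ)) := ⟨hx⟩
  simp_rw [hΨ]
  rw [sum_star_prod_mul_prod]
  refine prod_eq_zero (mem_univ j) ?_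
  rw [mod_eq_val_sub _ _ (by omega), mod_eq_val_sub _ _ (by omega), ← neg_neg (b - _), ← hj,
    ZMod.val_neg_of_ne_zero]
  exact sum_star_mul_compl_eq_zero hperp hF (ZMod.val_pos.2 hx) (ZMod.val_lt _)

/-- The `2n−1` nonzero GenShifts states (cyclic shifts of
`|1⟩|ψ₁⟩⋯|ψ_{n−1}⟩|ψ_{n−1}⊥⟩⋯|ψ₁⊥⟩`) are pairwise orthogonal. States on `2n−1` qubits
are represented as functions `(Fin (2n−1) → Fin 2) → ℂ`, a product state being the
product of its tensor factors; the `j`-th factor of `|Ψ_k⟩` is `F((k−1−j) mod (2n−1))`,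
where `F 0 = |1⟩`, `F i = |ψ_i⊥⟩` and `F (2n−1−i) = |ψ_i⟩` for `1 ≤ i ≤ n−1`. -/
theorem stmt12 (n : ℕ) (hn : 2 ≤ n)
    (ψ ψp : ℕ → (Fin 2 → ℂ))
    (hψunit : ∀ i, 1 ≤ i → i ≤ n - 1 → ∑ a, star (ψ i a) * ψ i a = 1)
    (hψpunit : ∀ i, 1 ≤ i → i ≤ n - 1 → ∑ a, star (ψp i a) * ψp i a = 1)
    (hperp : ∀ i, 1 ≤ i → i ≤ n - 1 → ∑ a, star (ψ i a) * ψp i a = 0)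
    (hij : ∀ i j, 1 ≤ i → i ≤ n - 1 → 1 ≤ j → j ≤ n - 1 → i ≠ j →
      (∑ a, star (ψ i a) * ψ j a) ≠ 0 ∧ (∑ a, star (ψp i a) * ψ j a) ≠ 0)
    (h0 : ∀ i, 1 ≤ i → i ≤ n - 1 → ψ i 0 ≠ 0 ∧ ψ i 1 ≠ 0)
    (F : ℕ → (Fin 2 → ℂ))
    (hF0 : F 0 = ![0, 1])
    (hF : ∀ i, 1 ≤ i → i ≤ n - 1 → F i = ψp i ∧ F (2 * n - 1 - i) = ψ i)
    (Ψ : ℕ → ((Fin (2 * n - 1) → Fin 2) → ℂ))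
    (hΨ : ∀ k g, Ψ k g = ∏ j : Fin (2 * n - 1),
      F ((k - 1 + (2 * n - 1) - (j : ℕ)) % (2 * n - 1)) (g j)) :
    ∀ k l, 1 ≤ k → k ≤ 2 * n - 1 → 1 ≤ l → l ≤ 2 * n - 1 → k ≠ l →
      ∑ g : Fin (2 * n - 1) → Fin 2, star (Ψ k g) * Ψ l g = 0 :=
  stmt12_general n ψ ψp hperp F hF Ψ hΨ
end

section
/- Under the hypotheses of the GenShifts construction (states |Ψ_1⟩,...,|Ψ_{2n−1}⟩ obtained by cyclic shifts of |1⟩|ψ_1⟩···|ψ_{n−1}⟩|ψ_{n−1}⊥⟩···|ψ_1⊥⟩, with all ⟨ψ_i|ψ_j⟩, ⟨ψ_i⊥|ψ_j⟩ nonzero for i≠j and all ⟨0|ψ_i⟩, ⟨1|ψ_i⟩ nonzero), for every pair j ≠ k there is exactly one party index i ∈ {1,...,2n−1} such that the i-th tensor factors of |Ψ_j⟩ and |Ψ_k⟩ are orthogonal. -/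
/-!
Label the local factors by `ZMod (2n-1)`: `F 0 = |1⟩`, `F i = ψ_i^⊥` and `F (-i) = ψ_i`. Since the
orthogonal complement of a nonzero vector of `ℂ²` is a line, the only orthogonal pairs among
distinct factors are `{F i, F (-i)}`, i.e. `F a ⊥ F b ↔ a + b = 0`. Party `i` sees the factors
`k - 1 - i` and `l - 1 - i`, so it is orthogonal exactly when `2 i = k + l - 2`, which has a unique
solution because `2` is invertible modulo the odd number `2n - 1`.
-/

section FinTwo

variable {K : Type*} [Field K] [StarRing K]

lemma star_dotProduct_eq_zero_comm {ι R : Type*} [Fintype ι] [CommSemiring R] [StarRing R]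
    {x y : ι → R} : star x ⬝ᵥ y = 0 ↔ star y ⬝ᵥ x = 0 := by
  rw [Matrix.star_dotProduct, star_eq_zero]

lemma ne_zero_iff_fin_two {M : Type*} [Zero M] {v : Fin 2 → M} : v ≠ 0 ↔ v 0 ≠ 0 ∨ v 1 ≠ 0 := by
  rw [Ne, funext_iff, Fin.forall_fin_two]
  tauto

lemma star_zero_one_dotProduct (y : Fin 2 → K) : star ![0, 1] ⬝ᵥ y = y 1 := by
  simp [dotProduct, Fin.sum_univ_two]

lemma apply_one_ne_zero_of_perp {x y : Fin 2 → K} (hx : x 0 ≠ 0) (hy : y ≠ 0)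
    (hxy : star x ⬝ᵥ y = 0) : y 1 ≠ 0 := by
  intro hy1_eq
  simp only [dotProduct, Fin.sum_univ_two, Pi.star_apply, hy1_eq, mul_zero, add_zero,
    mul_eq_zero, star_eq_zero] at hxy
  rcases ne_zero_iff_fin_two.mp hy with hy0 | hy1
  · exact hy0 (hxy.resolve_left hx)
  · exact hy1 hy1_eq

lemma star_dotProduct_eq_zero_of_common_perp {u v w x : Fin 2 → K} (hu : u ≠ 0) (hv : v ≠ 0)
    (huv : star u ⬝ᵥ v = 0) (huw : star u ⬝ᵥ w = 0) (hxv : star x ⬝ᵥ v = 0) :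
    star x ⬝ᵥ w = 0 := by
  -- `v` spans the line `uᗮ ⊆ K²`, so `w` is a multiple of `v`: their determinant vanishes.
  simp only [dotProduct, Fin.sum_univ_two, Pi.star_apply] at huv huw hxv ⊢
  have hdet : v 0 * w 1 - v 1 * w 0 = 0 := by
    rcases ne_zero_iff_fin_two.mp hu with hu0 | hu1
    · refine (mul_eq_zero.mp ?_).resolve_left (star_ne_zero.mpr hu0)
      linear_combination w 1 * huv - v 1 * huw
    · refine (mul_eq_zero.mp ?_).resolve_left (star_ne_zero.mpr hu1)
      linear_combination v 0 * huw - w 0 * huv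
  have hsmul : (star (x 0) * w 0 + star (x 1) * w 1) • v = 0 := by
    rw [funext_iff, Fin.forall_fin_two]
    simp only [Pi.smul_apply, smul_eq_mul, Pi.zero_apply]
    constructor
    · linear_combination w 0 * hxv + star (x 1) * hdet
    · linear_combination w 1 * hxv - star (x 0) * hdet
  exact (smul_eq_zero.mp hsmul).resolve_right hv

lemma star_dotProduct_eq_zero_of_perp_of_perp {x x' y y' : Fin 2 → K} (hx' : x' ≠ 0)
    (hy' : y' ≠ 0) (hx : star x ⬝ᵥ x' = 0) (hy : star y ⬝ᵥ y' = 0) (h : star x' ⬝ᵥ y' = 0) :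
    star x ⬝ᵥ y = 0 :=
  star_dotProduct_eq_zero_of_common_perp hy' hx' (star_dotProduct_eq_zero_comm.mp h)
    (star_dotProduct_eq_zero_comm.mp hy) hx

end FinTwo

namespace ZMod

lemma add_eq_zero_iff_val_add_val_eq {m : ℕ} [NeZero m] {a b : ZMod m} (hab : a ≠ b) :
    a + b = 0 ↔ a.val + b.val = m := by
  have hsum : a.val + b.val < 2 * m := by linarith [a.val_lt, b.val_lt]
  have hpos : a.val + b.val ≠ 0 := fun h => hab (val_injective m (by omega))
  rw [← val_eq_zero, val_add, ← Nat.dvd_iff_mod_eq_zero]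
  exact ⟨fun h => Nat.eq_of_dvd_of_lt_two_mul hpos h hsum, fun h => by rw [h]⟩

lemma val_natCast_sub (m a : ℕ) [NeZero m] (x : ZMod m) :
    ((a : ZMod m) - x).val = (a + m - x.val) % m := by
  rw [← val_natCast, Nat.cast_sub (by have := x.val_lt; omega)]
  simp

lemma val_finEquiv (m : ℕ) [NeZero m] (i : Fin m) : (finEquiv m i).val = i := by
  obtain ⟨m, rfl⟩ : ∃ m', m = m' + 1 := Nat.exists_eq_succ_of_ne_zero (NeZero.ne m)
  rfl

theorem existsUnique_shift_of_iff_add_eq_zero {m : ℕ} (hm : Odd m) (O : ZMod m → ZMod m → Prop)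
    (hO : ∀ a b, a ≠ b → (O a b ↔ a + b = 0)) {k l : ZMod m} (hkl : k ≠ l) :
    ∃! i, O (k - i) (l - i) := by
  have h2 : IsUnit (2 : ZMod m) := by
    simpa using (unitOfCoprime 2 (Nat.coprime_two_left.mpr hm)).isUnit
  have hmid : ∀ i, O (k - i) (l - i) ↔ 2 * i = k + l := fun i => by
    rw [hO _ _ (by simpa using hkl)]
    constructor <;> intro h <;> linear_combination -h
  refine ⟨h2.unit⁻¹ * (k + l), (hmid _).mpr (by rw [← mul_assoc, h2.mul_val_inv, one_mul]),
    fun i hi => ?_⟩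
  rw [← (hmid i).mp hi, ← mul_assoc, h2.val_inv_mul, one_mul]

end ZMod

section GenShifts

variable {n : ℕ} {ψ ψp F : ℕ → Fin 2 → ℂ}

theorem genShifts_factor_orthogonal_iff
    (hψp : ∀ i, 1 ≤ i → i ≤ n - 1 → ψp i ≠ 0)
    (hperp : ∀ i, 1 ≤ i → i ≤ n - 1 → star (ψ i) ⬝ᵥ ψp i = 0)
    (hij : ∀ i j, 1 ≤ i → i ≤ n - 1 → 1 ≤ j → j ≤ n - 1 → i ≠ j →
      star (ψ i) ⬝ᵥ ψ j ≠ 0 ∧ star (ψp i) ⬝ᵥ ψ j ≠ 0)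
    (h0 : ∀ i, 1 ≤ i → i ≤ n - 1 → ψ i 0 ≠ 0 ∧ ψ i 1 ≠ 0)
    (hF0 : F 0 = ![0, 1])
    (hF : ∀ i, 1 ≤ i → i ≤ n - 1 → F i = ψp i ∧ F (2 * n - 1 - i) = ψ i)
    {a b : ℕ} (ha : a < 2 * n - 1) (hb : b < 2 * n - 1) (hab : a ≠ b) :
    star (F a) ⬝ᵥ F b = 0 ↔ a + b = 2 * n - 1 := by
  wlog hlt : a < b generalizing a b
  · rw [star_dotProduct_eq_zero_comm, add_comm]
    exact this hb ha hab.symm (by omega)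
  have hhigh : ∀ j, n ≤ j → j < 2 * n - 1 → F j = ψ (2 * n - 1 - j) := fun j h1 h2 => by
    simpa [show 2 * n - 1 - (2 * n - 1 - j) = j by omega] using
      (hF (2 * n - 1 - j) (by omega) (by omega)).2
  rcases Nat.eq_zero_or_pos a with rfl | ha0
  · refine iff_of_false ?_ (by omega)
    rw [hF0, star_zero_one_dotProduct]
    by_cases hbn : b ≤ n - 1
    · rw [(hF b hlt hbn).1]
      exact apply_one_ne_zero_of_perp (h0 b hlt hbn).1 (hψp b hlt hbn) (hperp b hlt hbn)
    · rw [hhigh b (by omega) hb]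
      exact (h0 _ (by omega) (by omega)).2
  by_cases han : a ≤ n - 1
  · rw [(hF a ha0 han).1]
    by_cases hbn : b ≤ n - 1
    · rw [(hF b (by omega) hbn).1]
      refine iff_of_false (fun h => (hij a b ha0 han (by omega) hbn hab).1 ?_) (by omega)
      exact star_dotProduct_eq_zero_of_perp_of_perp (hψp a ha0 han) (hψp b (by omega) hbn)
        (hperp a ha0 han) (hperp b (by omega) hbn) h
    · rw [hhigh b (by omega) hb]
      constructor
      · intro h
        by_contra hne
        exact (hij a (2 * n - 1 - b) ha0 han (by omega) (by omega) (by omega)).2 h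
      · intro h
        obtain rfl : 2 * n - 1 - b = a := by omega
        exact star_dotProduct_eq_zero_comm.mp (hperp _ ha0 han)
  · rw [hhigh a (by omega) ha, hhigh b (by omega) hb]
    exact iff_of_false (hij _ _ (by omega) (by omega) (by omega) (by omega) (by omega)).1
      (by omega)

end GenShifts

theorem stmt13_general (n : ℕ)
    (ψ ψp : ℕ → (Fin 2 → ℂ))
    (hψpunit : ∀ i, 1 ≤ i → i ≤ n - 1 → ∑ a, star (ψp i a) * ψp i a = 1)
    (hperp : ∀ i, 1 ≤ i → i ≤ n - 1 → ∑ a, star (ψ i a) * ψp i a = 0)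
    (hij : ∀ i j, 1 ≤ i → i ≤ n - 1 → 1 ≤ j → j ≤ n - 1 → i ≠ j →
      (∑ a, star (ψ i a) * ψ j a) ≠ 0 ∧ (∑ a, star (ψp i a) * ψ j a) ≠ 0)
    (h0 : ∀ i, 1 ≤ i → i ≤ n - 1 → ψ i 0 ≠ 0 ∧ ψ i 1 ≠ 0)
    (F : ℕ → (Fin 2 → ℂ))
    (hF0 : F 0 = ![0, 1])
    (hF : ∀ i, 1 ≤ i → i ≤ n - 1 → F i = ψp i ∧ F (2 * n - 1 - i) = ψ i) :
    ∀ k l, 1 ≤ k → k ≤ 2 * n - 1 → 1 ≤ l → l ≤ 2 * n - 1 → k ≠ l →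
      ∃! i : Fin (2 * n - 1),
        ∑ a, star (F ((k - 1 + (2 * n - 1) - (i : ℕ)) % (2 * n - 1)) a) *
          F ((l - 1 + (2 * n - 1) - (i : ℕ)) % (2 * n - 1)) a = 0 := by
  intro k l hk1 hk2 hl1 hl2 hkl
  have : NeZero (2 * n - 1) := ⟨by omega⟩
  have hψp : ∀ i, 1 ≤ i → i ≤ n - 1 → ψp i ≠ 0 := fun i h1 h2 hzero => by
    simpa [hzero] using hψpunit i h1 h2
  have hshift : ((k - 1 : ℕ) : ZMod (2 * n - 1)) ≠ (l - 1 : ℕ) := by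
    rw [Ne, ZMod.natCast_eq_natCast_iff', Nat.mod_eq_of_lt (by omega), Nat.mod_eq_of_lt (by omega)]
    omega
  refine ((ZMod.finEquiv _).toEquiv.existsUnique_congr fun i => ?_).mpr
    (ZMod.existsUnique_shift_of_iff_add_eq_zero ⟨n - 1, by omega⟩
      (fun a b => star (F a.val) ⬝ᵥ F b.val = 0) (fun a b hab => ?_) hshift)
  · simp only [RingEquiv.toEquiv_eq_coe, EquivLike.coe_coe, ZMod.val_natCast_sub,
      ZMod.val_finEquiv]
    rfl
  · rw [ZMod.add_eq_zero_iff_val_add_val_eq hab]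
    exact genShifts_factor_orthogonal_iff hψp hperp hij h0 hF0 hF a.val_lt b.val_lt
      (fun h => hab (ZMod.val_injective _ h))

/-- In the GenShifts construction, for every pair `k ≠ l` of states there is exactly one
party `i` at which the local factors `F((k−1−i) mod (2n−1))` and `F((l−1−i) mod (2n−1))`
are orthogonal. -/
theorem stmt13 (n : ℕ) (hn : 2 ≤ n)
    (ψ ψp : ℕ → (Fin 2 → ℂ))
    (hψunit : ∀ i, 1 ≤ i → i ≤ n - 1 → ∑ a, star (ψ i a) * ψ i a = 1)
    (hψpunit : ∀ i, 1 ≤ i → i ≤ n - 1 → ∑ a, star (ψp i a) * ψp i a = 1)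
    (hperp : ∀ i, 1 ≤ i → i ≤ n - 1 → ∑ a, star (ψ i a) * ψp i a = 0)
    (hij : ∀ i j, 1 ≤ i → i ≤ n - 1 → 1 ≤ j → j ≤ n - 1 → i ≠ j →
      (∑ a, star (ψ i a) * ψ j a) ≠ 0 ∧ (∑ a, star (ψp i a) * ψ j a) ≠ 0)
    (h0 : ∀ i, 1 ≤ i → i ≤ n - 1 → ψ i 0 ≠ 0 ∧ ψ i 1 ≠ 0)
    (F : ℕ → (Fin 2 → ℂ))
    (hF0 : F 0 = ![0, 1])
    (hF : ∀ i, 1 ≤ i → i ≤ n - 1 → F i = ψp i ∧ F (2 * n - 1 - i) = ψ i) :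
    ∀ k l, 1 ≤ k → k ≤ 2 * n - 1 → 1 ≤ l → l ≤ 2 * n - 1 → k ≠ l →
      ∃! i : Fin (2 * n - 1),
        ∑ a, star (F ((k - 1 + (2 * n - 1) - (i : ℕ)) % (2 * n - 1)) a) *
          F ((l - 1 + (2 * n - 1) - (i : ℕ)) % (2 * n - 1)) a = 0 :=
  stmt13_general n ψ ψp hψpunit hperp hij h0 F hF0 hF
end

section
/- Let N = 2n−1 with n ≥ 3. Let S be the set of N cyclic shifts (as N-tuples of indices in Z_N) of the tuple (0, N−1, N−2, ..., 2, 1), where the tuple indexed by shift s has i-th coordinate equal to (s − i) mod N for appropriate indexing. Then for any subset T of shifts with |T| ≥ n+2, for every coordinate position i ∈ {1,...,N} there exist at least two pairs of elements of T whose i-th coordinates x, y satisfy x + y ≡ 0 (mod N) with x, y ≠ 0. -/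
/-!
Fix a coordinate `i` and translate by `-i`: the shifts in `T` other than `i` become a set `A` of
at least `n + 1` nonzero residues mod `N = 2n - 1`. Both `A` and `-A` lie among the `2n - 2`
nonzero residues, so `A ∩ -A` has at least `4` elements, and any `x ∈ A ∩ -A` gives the pair
`{i + x, i - x}` of shifts whose coordinates at `i` are nonzero and opposite. Three elements of
`A ∩ -A` already contain two that are not opposite, hence two different pairs.
-/

open Finset Pointwise

theorem Finset.two_mul_card_le_card_inter_neg {G : Type*} [AddGroup G] [DecidableEq G]
    [Fintype G] (A : Finset G) (hA : (0 : G) ∉ A) :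
    2 * #A ≤ Fintype.card G - 1 + #(A ∩ -A) := by
  have h0 : (0 : G) ∉ A ∪ -A := by simp [hA]
  have hunion : #(A ∪ -A) + 1 ≤ Fintype.card G :=
    card_insert_of_notMem h0 ▸ card_le_univ _
  have := card_union_add_card_inter A (-A)
  rw [card_neg] at this
  omega

theorem Finset.exists_ne_ne_neg_of_two_lt_card {G : Type*} [Neg G] {B : Finset G} (hB : 2 < #B) :
    ∃ x ∈ B, ∃ y ∈ B, y ≠ x ∧ y ≠ -x := by
  obtain ⟨a, ha, b, hb, c, hc, hab, hac, hbc⟩ := two_lt_card.1 hB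
  by_cases hba : b = -a
  · exact ⟨a, ha, c, hc, hac.symm, hba ▸ hbc.symm⟩
  · exact ⟨a, ha, b, hb, hab.symm, hba⟩

/-- Any `n+2` of the `2n−1` cyclic shift states (indexed by shifts `s ∈ Z_N`, `N = 2n−1`,
the `i`-th coordinate of shift `s` being `s − i mod N`) retain, at every coordinate `i`,
at least two distinct pairs of elements whose coordinates are nonzero and sum to `0 mod N`. -/
theorem stmt14 (n : ℕ) (hn : 3 ≤ n) (T : Finset (ZMod (2 * n - 1)))
    (hT : n + 2 ≤ T.card) :
    ∀ i : ZMod (2 * n - 1), ∃ s₁ t₁ s₂ t₂ : ZMod (2 * n - 1),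
      s₁ ∈ T ∧ t₁ ∈ T ∧ s₂ ∈ T ∧ t₂ ∈ T ∧
      (s₁ - i) + (t₁ - i) = 0 ∧ s₁ - i ≠ 0 ∧ t₁ - i ≠ 0 ∧
      (s₂ - i) + (t₂ - i) = 0 ∧ s₂ - i ≠ 0 ∧ t₂ - i ≠ 0 ∧
      ({s₁, t₁} : Finset (ZMod (2 * n - 1))) ≠ {s₂, t₂} := by
  intro i
  have : NeZero (2 * n - 1) := ⟨by omega⟩
  set A := (T.erase i).map (Equiv.subRight i).toEmbedding
  have hA0 : (0 : ZMod (2 * n - 1)) ∉ A := by simp [A]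
  have hAcard : n + 1 ≤ #A := by
    have := pred_card_le_card_erase (s := T) (a := i)
    rw [card_map]
    omega
  have hsym := A.two_mul_card_le_card_inter_neg hA0
  rw [ZMod.card] at hsym
  obtain ⟨x, hx, y, hy, hyx, hyx'⟩ := exists_ne_ne_neg_of_two_lt_card (B := A ∩ -A) (by omega)
  have hpair : ∀ z ∈ A ∩ -A, z + i ∈ T ∧ -z + i ∈ T ∧ z ≠ 0 := by
    intro z hz
    simp only [A, mem_inter, mem_neg', mem_map_equiv, mem_erase, Equiv.subRight_symm_apply,
      Ne, add_eq_right, neg_eq_zero] at hz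
    exact ⟨hz.1.2, hz.2.2, hz.1.1⟩
  obtain ⟨hx₁, hx₂, hx0⟩ := hpair x hx
  obtain ⟨hy₁, hy₂, hy0⟩ := hpair y hy
  refine ⟨x + i, -x + i, y + i, -y + i, hx₁, hx₂, hy₁, hy₂, by abel, by simpa, by simpa,
    by abel, by simpa, by simpa, fun h => ?_⟩
  have : y + i ∈ ({x + i, -x + i} : Finset _) := h ▸ mem_insert_self _ _
  simp only [mem_insert, mem_singleton, add_left_inj] at this
  tauto
end
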